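/- arXiv:1007.5327 — 4 statements merged into one kernel-verified Lean document; each statement's English description precedes it below -/
import Mathlib

section
/- Let U ⊆ ℝ² be a set whose projection onto the first coordinate is all of ℝ, and let X ⊆ ℝ be dense in ℝ with X × ℝ ⊆ U. Then U is connected. -/
/-- A vertical line is preconnected. -/
lemma vline_preconnected (a : ℝ) :
    IsPreconnected ({a} ×ˢ (Set.univ : Set ℝ)) :=
  isPreconnected_singleton.prod isPreconnected_univ

/-- Proposition (Connectedness): if `U ⊆ ℝ²` projects onto all of `ℝ` in the first
coordinate and contains the full vertical line over every point of a dense set `X`,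
then `U` is connected. -/
theorem interpolation_percolation_connectedness
    (U : Set (ℝ × ℝ)) (hproj : Prod.fst '' U = Set.univ)
    (X : Set ℝ) (hX : Dense X)
    (hXU : X ×ˢ (Set.univ : Set ℝ) ⊆ U) :
    IsConnected U := by
  have hUne : U.Nonempty := by
    have h0 : (0 : ℝ) ∈ Prod.fst '' U := by rw [hproj]; trivial
    obtain ⟨p, hp, -⟩ := h0
    exact ⟨p, hp⟩
  refine ⟨hUne, ?_⟩
  intro u v hu hv hUuv ⟨p, hpU, hpu⟩ ⟨q, hqU, hqv⟩
  by_contra hne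
  rw [Set.not_nonempty_iff_eq_empty] at hne
  -- each vertical line over a point of X lies entirely in u or entirely in v
  have hline : ∀ a ∈ X, ({a} ×ˢ (Set.univ : Set ℝ)) ⊆ u ∨ ({a} ×ˢ (Set.univ : Set ℝ)) ⊆ v := by
    intro a ha
    set L := ({a} ×ˢ (Set.univ : Set ℝ)) with hL
    have hLU : L ⊆ U := fun z hz => hXU ⟨by rw [show z.1 = a from hz.1]; exact ha, hz.2⟩
    by_cases hcu : (L ∩ u).Nonempty
    · by_cases hcv : (L ∩ v).Nonempty
      · exfalso
        obtain ⟨z, hz⟩ := (vline_preconnected a) u v hu hv (hLU.trans hUuv) hcu hcv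
        have : z ∈ U ∩ (u ∩ v) := ⟨hLU hz.1, hz.2⟩
        rw [hne] at this; exact this
      · left
        intro z hz
        rcases hUuv (hLU hz) with h | h
        · exact h
        · exact absurd ⟨z, hz, h⟩ hcv
    · right
      intro z hz
      rcases hUuv (hLU hz) with h | h
      · exact absurd ⟨z, hz, h⟩ hcu
      · exact h
  -- from a point of U in an open w, find nearby X-points whose line is in w
  have key : ∀ (w w' : Set (ℝ × ℝ)), IsOpen w → U ∩ (w ∩ w') = ∅ →
      (∀ a ∈ X, ({a} ×ˢ (Set.univ : Set ℝ)) ⊆ w ∨ ({a} ×ˢ (Set.univ : Set ℝ)) ⊆ w') →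
      ∀ x y : ℝ, (x, y) ∈ U → (x, y) ∈ w → ∀ ε > (0:ℝ),
        ∃ a ∈ X, dist a x < ε ∧ ({a} ×ˢ (Set.univ : Set ℝ)) ⊆ w := by
    intro w w' hw hemp hlines x y hxyU hxyw ε hε
    obtain ⟨δ, hδ, hball⟩ := Metric.isOpen_iff.1 hw (x, y) hxyw
    obtain ⟨a, hax, haX⟩ := Metric.dense_iff.1 hX x (min ε δ) (lt_min hε hδ)
    rw [Metric.mem_ball] at hax
    have hay : (a, y) ∈ w := by
      apply hball
      rw [Metric.mem_ball, Prod.dist_eq]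
      simp only [dist_self]
      exact max_lt (hax.trans_le (min_le_right ε δ)) hδ
    rcases hlines a haX with h | h
    · exact ⟨a, haX, lt_of_lt_of_le hax (min_le_left ε δ), h⟩
    · exfalso
      have haU : (a, y) ∈ U := hXU ⟨haX, trivial⟩
      have : (a, y) ∈ U ∩ (w ∩ w') := ⟨haU, hay, h ⟨rfl, trivial⟩⟩
      rw [hemp] at this; exact this
  have hemp_vu : U ∩ (v ∩ u) = ∅ := by rw [Set.inter_comm v u]; exact hne
  have hlines' : ∀ a ∈ X, ({a} ×ˢ (Set.univ : Set ℝ)) ⊆ v ∨ ({a} ×ˢ (Set.univ : Set ℝ)) ⊆ u :=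
    fun a ha => (hline a ha).symm
  set Xu := {a : ℝ | a ∈ X ∧ ({a} ×ˢ (Set.univ : Set ℝ)) ⊆ u} with hXu
  set Xv := {a : ℝ | a ∈ X ∧ ({a} ×ˢ (Set.univ : Set ℝ)) ⊆ v} with hXv
  -- closures of Xu and Xv cover ℝ
  have hmem_closure : ∀ (w w' : Set (ℝ × ℝ)), IsOpen w → U ∩ (w ∩ w') = ∅ →
      (∀ a ∈ X, ({a} ×ˢ (Set.univ : Set ℝ)) ⊆ w ∨ ({a} ×ˢ (Set.univ : Set ℝ)) ⊆ w') →
      ∀ x y : ℝ, (x, y) ∈ U → (x, y) ∈ w →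
      x ∈ closure {a : ℝ | a ∈ X ∧ ({a} ×ˢ (Set.univ : Set ℝ)) ⊆ w} := by
    intro w w' hw hemp hlines x y hxyU hxyw
    rw [Metric.mem_closure_iff]
    intro ε hε
    obtain ⟨a, haX, hax, hlw⟩ := key w w' hw hemp hlines x y hxyU hxyw ε hε
    exact ⟨a, ⟨haX, hlw⟩, by rwa [dist_comm]⟩
  have hcover : (Set.univ : Set ℝ) ⊆ closure Xu ∪ closure Xv := by
    intro x _
    have hx : x ∈ Prod.fst '' U := by rw [hproj]; trivial
    obtain ⟨z, hzU, hzx⟩ := hx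
    obtain ⟨x', y⟩ := z
    cases hzx
    rcases hUuv hzU with h | h
    · exact Or.inl (hmem_closure u v hu hne hline x' y hzU h)
    · exact Or.inr (hmem_closure v u hv hemp_vu hlines' x' y hzU h)
  have hne_u : (Set.univ ∩ closure Xu).Nonempty := by
    obtain ⟨x, y⟩ := p
    exact ⟨x, trivial, hmem_closure u v hu hne hline x y hpU hpu⟩
  have hne_v : (Set.univ ∩ closure Xv).Nonempty := by
    obtain ⟨x, y⟩ := q
    exact ⟨x, trivial, hmem_closure v u hv hemp_vu hlines' x y hqU hqv⟩
  obtain ⟨x, -, hxu, hxv⟩ := isPreconnected_closed_iff.1 (isPreconnected_univ (α := ℝ))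
    (closure Xu) (closure Xv) isClosed_closure isClosed_closure hcover hne_u hne_v
  -- derive contradiction at x
  have hx : x ∈ Prod.fst '' U := by rw [hproj]; trivial
  obtain ⟨z, hzU, hzx⟩ := hx
  obtain ⟨x', y⟩ := z
  cases hzx
  have final : ∀ (w w' : Set (ℝ × ℝ)), IsOpen w → U ∩ (w ∩ w') = ∅ →
      (x', y) ∈ w →
      x' ∈ closure {a : ℝ | a ∈ X ∧ ({a} ×ˢ (Set.univ : Set ℝ)) ⊆ w'} → False := by
    intro w w' hw hemp hxw hcl
    obtain ⟨δ, hδ, hball⟩ := Metric.isOpen_iff.1 hw (x', y) hxw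
    obtain ⟨b, ⟨hbX, hbw'⟩, hbd⟩ := Metric.mem_closure_iff.1 hcl δ hδ
    have hbw : (b, y) ∈ w := by
      apply hball
      rw [Metric.mem_ball, Prod.dist_eq]
      simp only [dist_self]
      exact max_lt (by rwa [dist_comm]) hδ
    have : (b, y) ∈ U ∩ (w ∩ w') := ⟨hXU ⟨hbX, trivial⟩, hbw, hbw' ⟨rfl, trivial⟩⟩
    rw [hemp] at this; exact this
  rcases hUuv hzU with h | h
  · exact final u v hu hne h hxv
  · exact final v u hv hemp_vu h hxu
end

section
/- If (μ_n)_{n≥0} is a sequence of positive reals decreasing monotonically to 0 and limsup_{n→∞} n·μ_n > 0, then for every bijection φ: ℕ → ℕ there exists a set M ⊆ ℕ such that the sum over n ∈ M of min{ μ_{φ(m)} : m ∈ M, m ≤ n } is infinite. -/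
/-!
Fix `c > 0` with `c < n μ_n` for infinitely many `n`. Choose thresholds `0 = P₀ < P₁ < ⋯`
(`threshold`) and indices `n_k = next P_k ≥ 2 P_k` with `c < n_k μ_{n_k}`, where `P_{k+1}`
exceeds every `m` with `φ m ≤ n_k`. The `block` `B_k = {m ≥ P_k | φ m ≤ n_k}` then lies in
`[P_k, P_{k+1})`, and it has at least `n_k + 1 - P_k ≥ n_k / 2` elements because `φ⁻¹` is
injective on `{0, …, n_k}`. Let `M = ⋃ B_k`. For `n ∈ B_k`, every `m ∈ M` with `m ≤ n` lies in
a block `B_j` with `j ≤ k`, so `φ m ≤ n_j ≤ n_k` and `μ_{φ m} ≥ μ_{n_k}`. Hence block `k`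
contributes at least `(n_k / 2) μ_{n_k} > c / 2`, and infinitely many disjoint blocks make the
series diverge.
-/

open Filter Finset Function

theorem not_summable_of_pairwise_disjoint {α : Type*} {f : α → ℝ} (hf : 0 ≤ f)
    {T : ℕ → Finset α} (hT : Pairwise (Disjoint on T)) {c : ℝ} (hc : 0 < c)
    (hsum : ∀ k, c ≤ ∑ x ∈ T k, f x) : ¬ Summable f := by
  classical
  intro hs
  obtain ⟨K, hK⟩ := exists_nat_gt ((∑' x, f x) / c)
  have hbiUnion : K * c ≤ ∑ x ∈ (range K).biUnion T, f x := by
    rw [sum_biUnion (hT.set_pairwise _)]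
    simpa using sum_le_sum fun k (_ : k ∈ range K) => hsum k
  have := hbiUnion.trans (hs.sum_le_tsum _ fun x _ => hf x)
  rw [div_lt_iff₀ hc] at hK
  linarith

theorem not_summable_subtype_of_pairwise_disjoint {α : Type*} {f : α → ℝ} {s : Set α}
    (hf : ∀ x ∈ s, 0 ≤ f x) {T : ℕ → Finset α} (hTs : ∀ k, ↑(T k) ⊆ s)
    (hT : Pairwise (Disjoint on T)) {c : ℝ} (hc : 0 < c) (hsum : ∀ k, c ≤ ∑ x ∈ T k, f x) :
    ¬ Summable (f ∘ (↑) : s → ℝ) := by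
  rw [summable_subtype_iff_indicator]
  refine not_summable_of_pairwise_disjoint (Set.indicator_nonneg hf) hT hc fun k => ?_
  rw [sum_congr rfl fun x hx => Set.indicator_of_mem (hTs k hx) f]
  exact hsum k

noncomputable def runningInf {α : Type*} [Preorder α] (a : α → ℝ) (M : Set α) (n : α) : ℝ :=
  sInf (a '' {m ∈ M | m ≤ n})

section runningInf

variable {α : Type*} [Preorder α] {a : α → ℝ} {M : Set α} {n : α}

theorem runningInf_nonneg (ha : ∀ m, 0 ≤ a m) : 0 ≤ runningInf a M n :=
  Real.sInf_nonneg <| by rintro _ ⟨m, -, rfl⟩; exact ha m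

theorem le_runningInf {b : ℝ} (hn : n ∈ M) (hb : ∀ m ∈ M, m ≤ n → b ≤ a m) :
    b ≤ runningInf a M n :=
  le_csInf ⟨a n, n, ⟨hn, le_rfl⟩, rfl⟩ <| by rintro _ ⟨m, ⟨hm, hmn⟩, rfl⟩; exact hb m hm hmn

end runningInf

theorem card_le_card_filter_le_add (s : Finset ℕ) (P : ℕ) : #s ≤ #(s.filter (P ≤ ·)) + P := by
  rw [← card_filter_add_card_filter_not (s := s) (P ≤ ·)]
  gcongr
  calc #(s.filter (¬ P ≤ ·)) ≤ #(range P) := card_le_card fun m hm => by simp_all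
    _ = P := card_range P

section sublevel

variable (φ : ℕ ≃ ℕ)

def sublevel (n : ℕ) : Finset ℕ := (range (n + 1)).image φ.symm

def sublevelBound (n : ℕ) : ℕ := (sublevel φ n).sup id + 1

variable {φ} {m n : ℕ}

theorem mem_sublevel : m ∈ sublevel φ n ↔ φ m ≤ n := by
  simp [sublevel, Equiv.symm_apply_eq]

theorem card_sublevel : #(sublevel φ n) = n + 1 := by
  rw [sublevel, card_image_of_injective _ φ.symm.injective, card_range]

theorem lt_sublevelBound (h : φ m ≤ n) : m < sublevelBound φ n :=
  Nat.lt_succ_of_le (le_sup (f := id) (mem_sublevel.2 h))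

theorem lt_sublevelBound_self : n < sublevelBound φ n := by
  have : #(sublevel φ n) ≤ #(range (sublevelBound φ n)) :=
    card_le_card fun m hm => mem_range.2 (lt_sublevelBound (mem_sublevel.1 hm))
  rwa [card_sublevel, card_range, Nat.succ_le_iff] at this

end sublevel

section blocks

variable (φ : ℕ ≃ ℕ) (next : ℕ → ℕ)

def threshold (k : ℕ) : ℕ := (fun P => sublevelBound φ (next P))^[k] 0

def block (k : ℕ) : Finset ℕ :=
  (sublevel φ (next (threshold φ next k))).filter (threshold φ next k ≤ ·)

variable {φ next} {j k m n : ℕ}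

theorem threshold_succ : threshold φ next (k + 1) = sublevelBound φ (next (threshold φ next k)) :=
  iterate_succ_apply' _ k 0

theorem mem_block :
    m ∈ block φ next k ↔ φ m ≤ next (threshold φ next k) ∧ threshold φ next k ≤ m := by
  rw [block, mem_filter, mem_sublevel]

theorem lt_threshold_succ_of_mem_block (h : m ∈ block φ next k) : m < threshold φ next (k + 1) :=
  threshold_succ ▸ lt_sublevelBound (mem_block.1 h).1

variable (hnext : ∀ P, 2 * P ≤ next P)
include hnext

theorem strictMono_threshold : StrictMono (threshold φ next) :=
  strictMono_nat_of_lt_succ fun k => by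
    have := hnext (threshold φ next k)
    have := lt_sublevelBound_self (φ := φ) (n := next (threshold φ next k))
    rw [threshold_succ]
    omega

theorem monotone_next_threshold : Monotone (next ∘ threshold φ next) :=
  monotone_nat_of_le_succ fun k => by
    have h₁ := hnext (threshold φ next (k + 1))
    have h₂ := lt_sublevelBound_self (φ := φ) (n := next (threshold φ next k))
    rw [threshold_succ] at h₁
    simp only [comp_apply, threshold_succ]
    omega

theorem le_of_mem_block_of_le (hn : n ∈ block φ next k) (hm : m ∈ block φ next j)
    (hmn : m ≤ n) : j ≤ k := by
  by_contra! hkj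
  have hP := (strictMono_threshold (φ := φ) hnext).monotone (show k + 1 ≤ j from hkj)
  have hm := (mem_block.1 hm).2
  have hn := lt_threshold_succ_of_mem_block hn
  omega

theorem pairwise_disjoint_block : Pairwise (Disjoint on block φ next) := by
  intro j k hjk
  refine disjoint_left.2 fun m hj hk => hjk ?_
  exact le_antisymm (le_of_mem_block_of_le hnext hk hj le_rfl)
    (le_of_mem_block_of_le hnext hj hk le_rfl)

theorem next_threshold_le_two_mul_card_block :
    next (threshold φ next k) ≤ 2 * #(block φ next k) := by
  have h₁ :=
    card_le_card_filter_le_add (sublevel φ (next (threshold φ next k))) (threshold φ next k)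
  have h₂ := hnext (threshold φ next k)
  rw [card_sublevel] at h₁
  rw [block]
  omega

end blocks

theorem exists_pos_frequently_lt_of_pos_limsup {ι : Type*} {l : Filter ι} [l.NeBot] {u : ι → ℝ}
    (hu : 0 ≤ u) (h : 0 < limsup u l) : ∃ c, 0 < c ∧ ∃ᶠ i in l, c < u i :=
  ⟨_, half_pos h, frequently_lt_of_lt_limsup (IsCoboundedUnder.of_frequently_ge
    (a := 0) (Frequently.of_forall hu)) (half_lt_self h)⟩

theorem half_le_sum_runningInf_block {φ : ℕ ≃ ℕ} {next : ℕ → ℕ} {μ : ℕ → ℝ}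
    (hpos : ∀ n, 0 ≤ μ n) (hmono : Antitone μ) {c : ℝ} (hnext : ∀ P, 2 * P ≤ next P)
    (hc : ∀ P, c < next P * μ (next P)) (k : ℕ) :
    c / 2 ≤ ∑ m ∈ block φ next k,
      runningInf (fun m => μ (φ m)) (⋃ j, ↑(block φ next j)) m := by
  set n := next (threshold φ next k)
  have hterm : ∀ m ∈ block φ next k,
      μ n ≤ runningInf (fun m => μ (φ m)) (⋃ j, ↑(block φ next j)) m := by
    refine fun m hm => le_runningInf (Set.mem_iUnion_of_mem k hm) fun m' hm' hle => ?_
    obtain ⟨j, hj⟩ := Set.mem_iUnion.1 hm'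
    exact hmono <| (mem_block.1 hj).1.trans <|
      monotone_next_threshold hnext (le_of_mem_block_of_le hnext hm hj hle)
  have hcard : (n : ℝ) / 2 ≤ #(block φ next k) := by
    rw [div_le_iff₀ two_pos, mul_comm]
    exact_mod_cast next_threshold_le_two_mul_card_block hnext
  calc c / 2 ≤ (n / 2) * μ n := by linarith [hc (threshold φ next k)]
    _ ≤ #(block φ next k) * μ n := mul_le_mul_of_nonneg_right hcard (hpos n)
    _ ≤ _ := by simpa using card_nsmul_le_sum _ _ _ hterm

theorem interpolation_percolation_lemma_impl_general
    (μ : ℕ → ℝ) (hpos : ∀ n, 0 < μ n) (hmono : Antitone μ)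
    (hsup : 0 < limsup (fun n : ℕ => (n : ℝ) * μ n) atTop) :
    ∀ φ : ℕ ≃ ℕ, ∃ M : Set ℕ,
      ¬ Summable (fun n : M => sInf ((fun m => μ (φ m)) '' {m ∈ M | m ≤ (n : ℕ)})) := by
  intro φ
  have hpos' n : 0 ≤ μ n := (hpos n).le
  obtain ⟨c, hc, hfreq⟩ :=
    exists_pos_frequently_lt_of_pos_limsup (fun n => mul_nonneg n.cast_nonneg (hpos' n)) hsup
  choose next hnext hcnext using fun P => frequently_atTop.1 hfreq (2 * P)
  refine ⟨⋃ k, ↑(block φ next k), ?_⟩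
  exact not_summable_subtype_of_pairwise_disjoint (f := runningInf (fun m => μ (φ m)) _)
    (fun _ _ => runningInf_nonneg fun _ => hpos' _)
    (fun k => Set.subset_iUnion_of_subset k subset_rfl) (pairwise_disjoint_block hnext)
    (half_pos hc) (half_le_sum_runningInf_block hpos' hmono hnext hcnext)

/-- Lemma 2.6: if `μ` is a positive sequence decreasing to `0` with
`limsup n·μ_n > 0`, then for every permutation `φ` of `ℕ` there is a set `M ⊆ ℕ`
such that `∑_{n ∈ M} min{μ_{φ(m)} : m ∈ M, m ≤ n} = ∞`. -/
theorem interpolation_percolation_lemma_impl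
    (μ : ℕ → ℝ) (hpos : ∀ n, 0 < μ n) (hmono : Antitone μ)
    (hlim : Tendsto μ atTop (nhds 0))
    (hsup : 0 < limsup (fun n : ℕ => (n : ℝ) * μ n) atTop) :
    ∀ φ : ℕ ≃ ℕ, ∃ M : Set ℕ,
      ¬ Summable (fun n : M => sInf ((fun m => μ (φ m)) '' {m ∈ M | m ≤ (n : ℕ)})) :=
  interpolation_percolation_lemma_impl_general μ hpos hmono hsup
end

section
/- Let G ⊆ ℝ be countable, let Y ⊆ ℝ be a random closed set that is stationary (Y + a has the same distribution as Y for all a ∈ ℝ) and almost surely countable. Then P[G ∩ Y ≠ ∅] = 0. -/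
/-!
Since `P[x ∈ Y]` does not depend on `x`, it equals the expected proportion of dyadic points
`k / 2ⁿ ∈ [0, 1)` lying in `Y`. The paper integrates over a uniform translation and uses Fubini;
without joint measurability in `(ω, x)` we use these Riemann sums instead. For a closed null set
they are bounded by the volume of its `2⁻ⁿ`-thickening, which tends to `0`, so dominated
convergence gives `P[x ∈ Y] = 0`; a countable `G` is then hit with probability `0`.
-/

open MeasureTheory Filter Metric Set Finset
open scoped ENNReal Topology

noncomputable def dyadicProportion (C : Set ℝ) (n : ℕ) : ℝ≥0∞ :=
  ∑ k ∈ Finset.range (2 ^ n), C.indicator (fun _ => ((2 : ℝ≥0∞) ^ n)⁻¹) ((k : ℝ) / 2 ^ n)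

lemma dyadicProportion_le_one (C : Set ℝ) (n : ℕ) : dyadicProportion C n ≤ 1 :=
  calc dyadicProportion C n ≤ ∑ _k ∈ Finset.range (2 ^ n), ((2 : ℝ≥0∞) ^ n)⁻¹ :=
        Finset.sum_le_sum fun _ _ => indicator_le_self' (fun _ _ => zero_le) _
    _ = 1 := by
      rw [Finset.sum_const, Finset.card_range, nsmul_eq_mul, Nat.cast_pow, Nat.cast_ofNat,
        ENNReal.mul_inv_cancel (by positivity) (by simp)]

lemma volume_Ico_div_two_pow (k n : ℕ) :
    volume (Ico ((k : ℝ) / 2 ^ n) (((k + 1 : ℕ) : ℝ) / 2 ^ n)) = ((2 : ℝ≥0∞) ^ n)⁻¹ := by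
  rw [Real.volume_Ico, Nat.cast_succ, add_div, add_sub_cancel_left, one_div,
    ENNReal.ofReal_inv_of_pos (by positivity), ENNReal.ofReal_pow zero_le_two, ENNReal.ofReal_ofNat]

lemma dyadicProportion_le_volume_cthickening (C : Set ℝ) (n : ℕ) :
    dyadicProportion C n ≤ volume (cthickening ((2 ^ n)⁻¹) (C ∩ Icc 0 1)) := by
  classical
  set I : ℕ → Set ℝ := fun k => Ico ((k : ℝ) / 2 ^ n) (((k + 1 : ℕ) : ℝ) / 2 ^ n)
  set S := (Finset.range (2 ^ n)).filter fun k : ℕ => (k : ℝ) / 2 ^ n ∈ C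
  have hdisj : (S : Set ℕ).PairwiseDisjoint I :=
    ((Monotone.pairwise_disjoint_on_Ico_succ (f := fun k : ℕ => (k : ℝ) / 2 ^ n)
      fun _ _ h => by dsimp only; gcongr).set_pairwise _)
  have hsub : ∀ k ∈ S, I k ⊆ cthickening ((2 ^ n)⁻¹) (C ∩ Icc 0 1) := by
    intro k hk x hx
    obtain ⟨hk, hkC⟩ := Finset.mem_filter.1 hk
    refine mem_cthickening_of_dist_le x _ _ _ ⟨hkC, by positivity, ?_⟩ ?_
    · rw [div_le_one (by positivity)]
      exact_mod_cast (Finset.mem_range.1 hk).le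
    · obtain ⟨hx₁, hx₂⟩ := hx
      rw [Nat.cast_succ, add_div, one_div] at hx₂
      rw [Real.dist_eq, abs_of_nonneg (sub_nonneg.2 hx₁)]
      linarith
  calc dyadicProportion C n = ∑ k ∈ S, volume (I k) := by
        simp only [dyadicProportion, S, I, Finset.sum_filter, indicator_apply,
          volume_Ico_div_two_pow]
    _ = volume (⋃ k ∈ S, I k) := (measure_biUnion_finset hdisj fun _ _ => measurableSet_Ico).symm
    _ ≤ _ := measure_mono (iUnion₂_subset hsub)

lemma tendsto_dyadicProportion_of_isClosed {C : Set ℝ} (hC : IsClosed C) (hC₀ : volume C = 0) :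
    Tendsto (dyadicProportion C) atTop (𝓝 0) := by
  have hK : IsCompact (C ∩ Icc 0 1) := isCompact_Icc.inter_left hC
  have hthick := tendsto_measure_cthickening_of_isCompact (μ := volume) hK
  rw [measure_mono_null inter_subset_left hC₀] at hthick
  have hmesh : Tendsto (fun n : ℕ => ((2 : ℝ) ^ n)⁻¹) atTop (𝓝 0) := by
    simpa only [inv_pow] using
      tendsto_pow_atTop_nhds_zero_of_lt_one (r := (2 : ℝ)⁻¹) (by norm_num) (by norm_num)
  exact tendsto_of_tendsto_of_tendsto_of_le_of_le tendsto_const_nhds (hthick.comp hmesh)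
    (fun _ => zero_le) (dyadicProportion_le_volume_cthickening C)

section RandomSet

variable {Ω : Type*} [MeasurableSpace Ω] {μ : Measure Ω} {Y : Ω → Set ℝ}

lemma measurable_dyadicProportion (hY : ∀ x, MeasurableSet {ω | x ∈ Y ω}) (n : ℕ) :
    Measurable fun ω => dyadicProportion (Y ω) n :=
  Finset.measurable_sum _ fun k _ => measurable_const.indicator (hY ((k : ℝ) / 2 ^ n))

lemma lintegral_dyadicProportion (hY : ∀ x, MeasurableSet {ω | x ∈ Y ω}) {p : ℝ≥0∞}
    (hp : ∀ x, μ {ω | x ∈ Y ω} = p) (n : ℕ) :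
    ∫⁻ ω, dyadicProportion (Y ω) n ∂μ = p := by
  calc ∫⁻ ω, dyadicProportion (Y ω) n ∂μ
      = ∫⁻ ω, ∑ k ∈ Finset.range (2 ^ n),
          {ω | (k : ℝ) / 2 ^ n ∈ Y ω}.indicator (fun _ => ((2 : ℝ≥0∞) ^ n)⁻¹) ω ∂μ := rfl
    _ = ∑ k ∈ Finset.range (2 ^ n), ((2 : ℝ≥0∞) ^ n)⁻¹ * μ {ω | (k : ℝ) / 2 ^ n ∈ Y ω} := by
        rw [lintegral_finsetSum _ fun (k : ℕ) _ =>
          measurable_const.indicator (hY ((k : ℝ) / 2 ^ n))]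
        exact Finset.sum_congr rfl fun k _ => lintegral_indicator_const (hY _) _
    _ = p := by
      simp only [hp, Finset.sum_const, Finset.card_range, nsmul_eq_mul, Nat.cast_pow,
        Nat.cast_ofNat]
      rw [← mul_assoc, ENNReal.mul_inv_cancel (by positivity) (by simp), one_mul]

theorem eq_zero_of_forall_measure_mem_eq [IsFiniteMeasure μ]
    (hY : ∀ x, MeasurableSet {ω | x ∈ Y ω}) {p : ℝ≥0∞} (hp : ∀ x, μ {ω | x ∈ Y ω} = p)
    (hclosed : ∀ᵐ ω ∂μ, IsClosed (Y ω)) (hnull : ∀ᵐ ω ∂μ, volume (Y ω) = 0) : p = 0 := by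
  have hpointwise : ∀ᵐ ω ∂μ, Tendsto (fun n => dyadicProportion (Y ω) n) atTop (𝓝 0) := by
    filter_upwards [hclosed, hnull] with ω hC hC₀
    exact tendsto_dyadicProportion_of_isClosed hC hC₀
  have hlim := tendsto_lintegral_of_dominated_convergence (μ := μ) (fun _ => 1)
    (measurable_dyadicProportion hY) (fun n => ae_of_all _ fun ω => dyadicProportion_le_one _ n)
    (by simp) hpointwise
  simp_rw [lintegral_dyadicProportion hY hp, lintegral_zero] at hlim
  exact tendsto_nhds_unique tendsto_const_nhds hlim

end RandomSet

/-- Core of Proposition 2.11: if `G ⊆ ℝ` is countable and `Y` is a stationary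
random closed set (its hitting probabilities are invariant under translation)
which is almost surely countable, then `P[G ∩ Y ≠ ∅] = 0`. -/
theorem interpolation_percolation_stationary_avoids_countable
    {Ω : Type*} [MeasurableSpace Ω] (P : Measure Ω) [IsProbabilityMeasure P]
    (G : Set ℝ) (hG : G.Countable)
    (Y : Ω → Set ℝ)
    (hclosed : ∀ ω, IsClosed (Y ω))
    (hcount : ∀ᵐ ω ∂P, (Y ω).Countable)
    (hmeas : ∀ B : Set ℝ, B.Countable → MeasurableSet {ω | (Y ω ∩ B).Nonempty})
    (hstat : ∀ (a : ℝ) (B : Set ℝ), B.Countable →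
      P {ω | (((fun y => y + a) '' Y ω) ∩ B).Nonempty} = P {ω | (Y ω ∩ B).Nonempty}) :
    P {ω | (G ∩ Y ω).Nonempty} = 0 := by
  have hY : ∀ x, MeasurableSet {ω | x ∈ Y ω} := fun x => by
    simpa only [inter_singleton_nonempty] using hmeas {x} (countable_singleton x)
  have hp : ∀ x, P {ω | x ∈ Y ω} = P {ω | 0 ∈ Y ω} := fun x => by
    simpa only [inter_singleton_nonempty, Set.image_add_right, Set.mem_preimage,
      add_neg_cancel] using (hstat x {x} (countable_singleton x)).symm
  have hp₀ := eq_zero_of_forall_measure_mem_eq hY hp (ae_of_all _ hclosed)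
    (hcount.mono fun ω hω => hω.measure_zero volume)
  have hunion : {ω | (G ∩ Y ω).Nonempty} = ⋃ x ∈ G, {ω | x ∈ Y ω} := by
    ext ω
    simp [Set.Nonempty]
  rw [hunion, measure_biUnion_null_iff hG]
  exact fun x _ => (hp x).trans hp₀
end

section
/- Let φ_n be, for a finite set of distinct reals x_0, …, x_n, the permutation of {0,…,n} making (x_{φ_n(i)})_i strictly increasing. Let Y_0, …, Y_n ⊆ ℝ be closed sets, each bounded below, and define S_{-1} = a and S_i = min{ y ∈ Y_{φ_n(i)} : y ≥ S_{i-1} } for 0 ≤ i ≤ n (assuming each set {y ∈ Y_{φ_n(i)} : y ≥ S_{i-1}} is nonempty). Then any increasing function f : ℝ → [a, b] with f(x_i) ∈ Y_i for all 0 ≤ i ≤ n satisfies f(x_{φ_n(i)}) ≥ S_i for all i; in particular S_n ≤ b. -/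
theorem greedy_selection_le_of_monotone {α : Type*} [Preorder α] {n : ℕ}
    {T : Fin (n + 1) → Set α} {S : ℕ → α} {g : Fin (n + 1) → α}
    (hS : ∀ i : Fin (n + 1), IsLeast {y | y ∈ T i ∧ S i ≤ y} (S (i + 1)))
    (hg : Monotone g) (hgT : ∀ i, g i ∈ T i) (h0 : S 0 ≤ g 0) :
    ∀ i : Fin (n + 1), S ((i : ℕ) + 1) ≤ g i := by
  intro i
  induction i using Fin.induction with
  | zero => exact (hS 0).2 ⟨hgT 0, h0⟩
  | succ j ih =>
    have hstep : S ((j : ℕ) + 1) ≤ g j.succ := ih.trans (hg Fin.castSucc_lt_succ.le)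
    exact (hS j.succ).2 ⟨hgT j.succ, by simpa using hstep⟩

theorem interpolation_percolation_greedy_lower_bound_general
    (n : ℕ) (a b : ℝ)
    (x : Fin (n + 1) → ℝ)
    (φ : Equiv.Perm (Fin (n + 1))) (hφ : StrictMono (fun i => x (φ i)))
    (Y : Fin (n + 1) → Set ℝ)
    (S : ℕ → ℝ) (hS0 : S 0 = a)
    (hS : ∀ i : Fin (n + 1), IsLeast {y | y ∈ Y (φ i) ∧ S i ≤ y} (S (i + 1))) :
    ∀ f : ℝ → ℝ, Monotone f → (∀ t : ℝ, f t ∈ Set.Icc a b) →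
      (∀ i : Fin (n + 1), f (x i) ∈ Y i) →
      (∀ i : Fin (n + 1), S ((i : ℕ) + 1) ≤ f (x (φ i))) ∧ S (n + 1) ≤ b := by
  intro f hf hfab hfY
  have hlower : ∀ i : Fin (n + 1), S ((i : ℕ) + 1) ≤ f (x (φ i)) :=
    greedy_selection_le_of_monotone hS (hf.comp hφ.monotone) (fun i => hfY (φ i))
      (hS0 ▸ (hfab _).1)
  refine ⟨hlower, ?_⟩
  simpa using (hlower (Fin.last n)).trans (hfab _).2

/-- Greedy lower bound in the proof of Theorem 2.7: order distinct sites
`x₀, …, x_n` increasingly via the permutation `φ`, and define `S₀ = a` and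
`S_{i+1} = min{y ∈ Y_{φ(i)} : y ≥ S_i}`. Then every increasing
`f : ℝ → [a, b]` with `f(x_i) ∈ Y_i` for all `i` satisfies
`S_{i+1} ≤ f(x_{φ(i)})` for all `i`; in particular `S_{n+1} ≤ b`. -/
theorem interpolation_percolation_greedy_lower_bound
    (n : ℕ) (a b : ℝ) (hab : a < b)
    (x : Fin (n + 1) → ℝ) (hx : Function.Injective x)
    (φ : Equiv.Perm (Fin (n + 1))) (hφ : StrictMono (fun i => x (φ i)))
    (Y : Fin (n + 1) → Set ℝ)
    (hclosed : ∀ i, IsClosed (Y i)) (hbdd : ∀ i, BddBelow (Y i))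
    (S : ℕ → ℝ) (hS0 : S 0 = a)
    (hS : ∀ i : Fin (n + 1), IsLeast {y | y ∈ Y (φ i) ∧ S i ≤ y} (S (i + 1))) :
    ∀ f : ℝ → ℝ, Monotone f → (∀ t : ℝ, f t ∈ Set.Icc a b) →
      (∀ i : Fin (n + 1), f (x i) ∈ Y i) →
      (∀ i : Fin (n + 1), S ((i : ℕ) + 1) ≤ f (x (φ i))) ∧ S (n + 1) ≤ b :=
  interpolation_percolation_greedy_lower_bound_general n a b x φ hφ Y S hS0 hS
end
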